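/- (Maximizing the worst-case growth rate, Corollary 4.4.) Let T ≥ 2, ε ∈ (0,1), μ ∈ ℝ^N, Σ a symmetric positive definite N×N real matrix, and let ρ̄ ∈ (−1/(T−1), 1). Define c₁ = sqrt( ((1−ε)(1 + (T−1)ρ̄)) / (εT) ), c₂ = sqrt( ((T−1)(1−ρ̄)) / (εT) ), G(w) = (1/2)·( 1 − (1 − wᵀμ + c₁·sqrt(wᵀΣw))² − c₂²·wᵀΣw ), and f(w) = ‖( 1 − wᵀμ + c₁·sqrt(wᵀΣw), c₂·sqrt(wᵀΣw) )‖ (Euclidean norm in ℝ²). Let W ⊆ ℝ^N be a convex set such that 1 − wᵀμ > sqrt( ((1 + (T−1)ρ̄)·ε) / ((1−ε)·T) ) · sqrt(wᵀΣw) for every w ∈ W. Then: (a) G(w) = (1/2)·(1 − f(w)²) and f(w) > 0 for every w ∈ W, so a point w* ∈ W maximizes G over W if and only if w* minimizes f over W; and (b) f is a convex function on W. -/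

import Mathlib

open Matrix

noncomputable section

/-- `c₁ = √((1-ε)(1+(T-1)ρ̄)/(εT))`. -/
def c1 (T : ℕ) (ε ρbar : ℝ) : ℝ :=
  Real.sqrt ((1 - ε) * (1 + ((T : ℝ) - 1) * ρbar) / (ε * T))

/-- `c₂ = √((T-1)(1-ρ̄)/(εT))`. -/
def c2 (T : ℕ) (ε ρbar : ℝ) : ℝ :=
  Real.sqrt (((T : ℝ) - 1) * (1 - ρbar) / (ε * T))

/-- The closed-form worst-case growth rate
`G(w) = (1/2)(1 - (1 - wᵀμ + c₁√(wᵀΣw))² - c₂²·wᵀΣw)`. -/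
def G (T N : ℕ) (ε ρbar : ℝ) (μ : Fin N → ℝ) (S : Matrix (Fin N) (Fin N) ℝ)
    (w : Fin N → ℝ) : ℝ :=
  (1 / 2) * (1 - (1 - w ⬝ᵥ μ + c1 T ε ρbar * Real.sqrt (w ⬝ᵥ S.mulVec w)) ^ 2 -
    (c2 T ε ρbar) ^ 2 * (w ⬝ᵥ S.mulVec w))

/-- `f(w) = ‖(1 - wᵀμ + c₁√(wᵀΣw), c₂√(wᵀΣw))‖`, Euclidean norm in `ℝ²`. -/
def f (T N : ℕ) (ε ρbar : ℝ) (μ : Fin N → ℝ) (S : Matrix (Fin N) (Fin N) ℝ)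
    (w : Fin N → ℝ) : ℝ :=
  ‖((WithLp.equiv 2 (Fin 2 → ℝ)).symm
      ![1 - w ⬝ᵥ μ + c1 T ε ρbar * Real.sqrt (w ⬝ᵥ S.mulVec w),
        c2 T ε ρbar * Real.sqrt (w ⬝ᵥ S.mulVec w)] : EuclideanSpace ℝ (Fin 2))‖

/-! Feasibility makes the first coordinate `1 - wᵀμ + c₁√(wᵀΣw)` of the vector whose norm is `f`
positive, so `f > 0` on `W`, and `G = (1 - f²)/2` is a decreasing function of `f ≥ 0`. Both
coordinates are convex and nonnegative on `W`, since `√(wᵀΣw) = ‖Σ^{1/2} w‖` is convex; as the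
Euclidean norm is convex and monotone on the nonnegative orthant, `f` is convex. -/

open scoped MatrixOrder

namespace Matrix.PosSemidef

variable {n : Type*} [Fintype n] [DecidableEq n] {S : Matrix n n ℝ}

lemma dotProduct_mulVec_eq_norm_sq (hS : S.PosSemidef) (w : n → ℝ) :
    w ⬝ᵥ S *ᵥ w = ‖WithLp.toLp 2 (CFC.sqrt S *ᵥ w)‖ ^ 2 := by
  have hR : (CFC.sqrt S)ᵀ = CFC.sqrt S := (CFC.sqrt_nonneg S).isSelfAdjoint
  rw [EuclideanSpace.norm_sq_eq]
  conv_lhs => rw [← CFC.sqrt_mul_sqrt_self S hS.nonneg, ← mulVec_mulVec, dotProduct_mulVec,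
    ← mulVec_transpose, hR]
  simp [dotProduct, sq]

lemma convexOn_sqrt_dotProduct_mulVec (hS : S.PosSemidef) :
    ConvexOn ℝ Set.univ fun w : n → ℝ => √(w ⬝ᵥ S *ᵥ w) := by
  have h : (fun w : n → ℝ => √(w ⬝ᵥ S *ᵥ w)) =
      norm ∘ ((WithLp.linearEquiv 2 ℝ (n → ℝ)).symm.toLinearMap ∘ₗ (CFC.sqrt S).mulVecLin) := by
    funext w
    simp [hS.dotProduct_mulVec_eq_norm_sq w]
  rw [h]
  exact (convexOn_norm convex_univ).comp_linearMap _

end Matrix.PosSemidef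

lemma EuclideanSpace.norm_le_norm_of_abs_le {ι : Type*} [Fintype ι] {x y : EuclideanSpace ℝ ι}
    (h : ∀ i, |x i| ≤ |y i|) : ‖x‖ ≤ ‖y‖ := by
  rw [EuclideanSpace.norm_eq, EuclideanSpace.norm_eq]
  gcongr with i
  simpa only [Real.norm_eq_abs] using h i

lemma ConvexOn.norm_euclideanSpace {E ι : Type*} [AddCommGroup E] [Module ℝ E] [Fintype ι]
    {s : Set E} {v : E → EuclideanSpace ℝ ι} (hs : Convex ℝ s)
    (hv : ∀ i, ConvexOn ℝ s fun x => v x i) (hv₀ : ∀ i, ∀ x ∈ s, 0 ≤ v x i) :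
    ConvexOn ℝ s fun x => ‖v x‖ := by
  refine ⟨hs, fun x hx y hy a b ha hb hab => ?_⟩
  calc ‖v (a • x + b • y)‖ ≤ ‖a • v x + b • v y‖ := by
        refine EuclideanSpace.norm_le_norm_of_abs_le fun i => ?_
        have hcomb : (a • v x + b • v y) i = a * v x i + b * v y i := by simp
        rw [hcomb, abs_of_nonneg (hv₀ i _ (hs hx hy ha hb hab)),
          abs_of_nonneg (by have := hv₀ i x hx; have := hv₀ i y hy; positivity)]
        exact (hv i).2 hx hy ha hb hab
    _ ≤ a * ‖v x‖ + b * ‖v y‖ := by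
        refine (norm_add_le _ _).trans_eq ?_
        rw [norm_smul, norm_smul, Real.norm_of_nonneg ha, Real.norm_of_nonneg hb]

lemma isMaxOn_half_one_sub_sq_iff_isMinOn {α : Type*} {φ : α → ℝ} {s : Set α} {a : α}
    (hφ : ∀ x, 0 ≤ φ x) :
    IsMaxOn (fun x => 1 / 2 * (1 - φ x ^ 2)) s a ↔ IsMinOn φ s a := by
  simp only [isMaxOn_iff, isMinOn_iff]
  refine forall₂_congr fun x _ => ?_
  rw [← pow_le_pow_iff_left₀ (hφ a) (hφ x) two_ne_zero]
  constructor <;> intro h <;> linarith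

section Portfolio

variable {T N : ℕ} {ε ρbar : ℝ} {μ : Fin N → ℝ} {S : Matrix (Fin N) (Fin N) ℝ}

lemma f_sq (w : Fin N → ℝ) :
    f T N ε ρbar μ S w ^ 2 = (1 - w ⬝ᵥ μ + c1 T ε ρbar * √(w ⬝ᵥ S *ᵥ w)) ^ 2 +
      (c2 T ε ρbar * √(w ⬝ᵥ S *ᵥ w)) ^ 2 := by
  simp [f, EuclideanSpace.norm_sq_eq, Fin.sum_univ_two]

lemma G_eq_half_one_sub_f_sq (hS : S.PosSemidef) (w : Fin N → ℝ) :
    G T N ε ρbar μ S w = 1 / 2 * (1 - f T N ε ρbar μ S w ^ 2) := by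
  have hq : 0 ≤ w ⬝ᵥ S *ᵥ w := by simpa using hS.dotProduct_mulVec_nonneg w
  rw [f_sq, G, mul_pow, Real.sq_sqrt hq]
  ring

lemma f_pos {w : Fin N → ℝ} (hw : 0 < 1 - w ⬝ᵥ μ + c1 T ε ρbar * √(w ⬝ᵥ S *ᵥ w)) :
    0 < f T N ε ρbar μ S w := by
  refine lt_of_pow_lt_pow_left₀ 2 (norm_nonneg _) ?_
  rw [f_sq, zero_pow two_ne_zero]
  exact add_pos_of_pos_of_nonneg (pow_pos hw 2) (sq_nonneg _)

lemma convexOn_f (hS : S.PosSemidef) {W : Set (Fin N → ℝ)} (hW : Convex ℝ W)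
    (hW₀ : ∀ w ∈ W, 0 ≤ 1 - w ⬝ᵥ μ + c1 T ε ρbar * √(w ⬝ᵥ S *ᵥ w)) :
    ConvexOn ℝ W (f T N ε ρbar μ S) := by
  have hq : ConvexOn ℝ W fun w => √(w ⬝ᵥ S *ᵥ w) :=
    hS.convexOn_sqrt_dotProduct_mulVec.subset (Set.subset_univ W) hW
  have hc1 : 0 ≤ c1 T ε ρbar := Real.sqrt_nonneg _
  have hc2 : 0 ≤ c2 T ε ρbar := Real.sqrt_nonneg _
  have ha : ConvexOn ℝ W fun w => 1 - w ⬝ᵥ μ + c1 T ε ρbar * √(w ⬝ᵥ S *ᵥ w) :=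
    (((hq.smul hc1).add_const 1).sub (((dotProductBilin ℝ ℝ).flip μ).concaveOn hW)).congr
      fun w _ => by simp only [Pi.add_apply, Pi.sub_apply, smul_eq_mul, LinearMap.flip_apply,
        dotProductBilin_apply_apply]; ring
  refine ConvexOn.norm_euclideanSpace hW (fun i => ?_) (fun i w hw => ?_)
  · fin_cases i
    · simpa using ha
    · simpa using hq.smul hc2
  · fin_cases i
    · simpa using hW₀ w hw
    · simpa using mul_nonneg hc2 (Real.sqrt_nonneg _)

end Portfolio

theorem maximizing_worst_case_growth_rate_general (T N : ℕ) (ε : ℝ)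
    (μ : Fin N → ℝ) (S : Matrix (Fin N) (Fin N) ℝ)
    (hSpd : S.PosDef) (ρbar : ℝ)
    (W : Set (Fin N → ℝ)) (hW : Convex ℝ W)
    (hfeas : ∀ w ∈ W,
      Real.sqrt ((1 + ((T : ℝ) - 1) * ρbar) * ε / ((1 - ε) * T)) *
        Real.sqrt (w ⬝ᵥ S.mulVec w) < 1 - w ⬝ᵥ μ) :
    ((∀ w ∈ W, G T N ε ρbar μ S w = (1 / 2) * (1 - (f T N ε ρbar μ S w) ^ 2) ∧
        0 < f T N ε ρbar μ S w) ∧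
      (∀ wstar ∈ W,
        ((∀ w ∈ W, G T N ε ρbar μ S w ≤ G T N ε ρbar μ S wstar) ↔
          (∀ w ∈ W, f T N ε ρbar μ S wstar ≤ f T N ε ρbar μ S w)))) ∧
    ConvexOn ℝ W (f T N ε ρbar μ S) := by
  have hG : G T N ε ρbar μ S = fun w => 1 / 2 * (1 - f T N ε ρbar μ S w ^ 2) :=
    funext (G_eq_half_one_sub_f_sq hSpd.posSemidef)
  have hW₀ : ∀ w ∈ W, 0 < 1 - w ⬝ᵥ μ + c1 T ε ρbar * √(w ⬝ᵥ S *ᵥ w) := fun w hw =>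
    add_pos_of_pos_of_nonneg
      ((mul_nonneg (Real.sqrt_nonneg _) (Real.sqrt_nonneg _)).trans_lt (hfeas w hw))
      (mul_nonneg (Real.sqrt_nonneg _) (Real.sqrt_nonneg _))
  refine ⟨⟨fun w hw => ⟨congrFun hG w, f_pos (hW₀ w hw)⟩, fun wstar _ => ?_⟩,
    convexOn_f hSpd.posSemidef hW fun w hw => (hW₀ w hw).le⟩
  rw [← isMaxOn_iff, ← isMinOn_iff, hG]
  exact isMaxOn_half_one_sub_sq_iff_isMinOn fun w => norm_nonneg _

/-- Maximizing the worst-case growth rate (Corollary 4.4): on a convex set `W` of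
portfolios satisfying the feasibility condition, (a) `G(w) = (1/2)(1 - f(w)²)` with
`f(w) > 0`, so `w*` maximizes `G` over `W` iff it minimizes `f` over `W`; and
(b) `f` is convex on `W`. -/
theorem maximizing_worst_case_growth_rate (T N : ℕ) (hT : 2 ≤ T) (ε : ℝ)
    (hε : ε ∈ Set.Ioo (0 : ℝ) 1) (μ : Fin N → ℝ) (S : Matrix (Fin N) (Fin N) ℝ)
    (hS : S.IsSymm) (hSpd : S.PosDef) (ρbar : ℝ)
    (hρbar : ρbar ∈ Set.Ioo (-1 / ((T : ℝ) - 1)) 1)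
    (W : Set (Fin N → ℝ)) (hW : Convex ℝ W)
    (hfeas : ∀ w ∈ W,
      Real.sqrt ((1 + ((T : ℝ) - 1) * ρbar) * ε / ((1 - ε) * T)) *
        Real.sqrt (w ⬝ᵥ S.mulVec w) < 1 - w ⬝ᵥ μ) :
    ((∀ w ∈ W, G T N ε ρbar μ S w = (1 / 2) * (1 - (f T N ε ρbar μ S w) ^ 2) ∧
        0 < f T N ε ρbar μ S w) ∧
      (∀ wstar ∈ W,
        ((∀ w ∈ W, G T N ε ρbar μ S w ≤ G T N ε ρbar μ S wstar) ↔
          (∀ w ∈ W, f T N ε ρbar μ S wstar ≤ f T N ε ρbar μ S w)))) ∧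
    ConvexOn ℝ W (f T N ε ρbar μ S) :=
  maximizing_worst_case_growth_rate_general T N ε μ S hSpd ρbar W hW hfeas
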